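/- arXiv:1708.09690 — 3 statements merged into one kernel-verified Lean document; each statement's English description precedes it below -/
import Mathlib

section
/- Let P, b, a, K : ℝ → ℝ be continuous on [t_init, 0], with P Lipschitz along a trajectory with bounded velocity, P(t) > 0 and b(t) < 0 for t ∈ [t_init, 0), P(0) = 0, b(0) < 0, and K(0) < 0. Define ẍ(t) = a(t) - K(t)·b(t)/P(t). If additionally x satisfies ẋ(t_init) > 0, then ẋ cannot remain positive on all of [t_init, 0); i.e., slip motion terminates before reaching the state P = 0 < -b. -/
/-!
Along the trajectory `P(q t) ≤ L M (-t)`, since `P` is Lipschitz, `q` has speed at most `M`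
and `P(q 0) = 0`; near `t = 0` continuity gives `K b ≥ c > 0`. Hence the tangential
acceleration satisfies `ẍ = a - K b / P ≤ A + D / t` with `D = c / (L M) > 0`, and integrating
this bound gives `ẋ(t) ≤ const + D log(-t) → -∞` as `t → 0⁻`, so `ẋ` turns negative before
`t = 0`.
-/

open Set Filter Topology

theorem LipschitzWith.dist_comp_le_of_norm_hasDerivAt_le {E F : Type*} [NormedAddCommGroup E]
    [NormedSpace ℝ E] [PseudoMetricSpace F] {f : E → F} {K : NNReal} (hf : LipschitzWith K f)
    {γ γ' : ℝ → E} {s : Set ℝ} (hs : Convex ℝ s) {M : ℝ}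
    (hγ : ∀ t ∈ s, HasDerivAt γ (γ' t) t) (hM : ∀ t ∈ s, ‖γ' t‖ ≤ M)
    {t₁ t₂ : ℝ} (h₁ : t₁ ∈ s) (h₂ : t₂ ∈ s) :
    dist (f (γ t₁)) (f (γ t₂)) ≤ K * M * dist t₁ t₂ := by
  calc dist (f (γ t₁)) (f (γ t₂)) ≤ K * dist (γ t₁) (γ t₂) := hf.dist_le_mul _ _
    _ ≤ K * (M * dist t₁ t₂) := by
      gcongr
      rw [dist_eq_norm', dist_eq_norm']
      exact hs.norm_image_sub_le_of_norm_hasDerivWithin_le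
        (fun t ht => (hγ t ht).hasDerivWithinAt) hM h₁ h₂
    _ = K * M * dist t₁ t₂ := (mul_assoc _ _ _).symm

/- `Real.log` is even, so `log s` here is `log (-s)`, whose derivative on `s < 0` is `1 / s`. -/
theorem antitoneOn_sub_mul_log {g g' : ℝ → ℝ} {A D t₁ : ℝ}
    (h : ∀ s ∈ Ioo t₁ 0, HasDerivAt g (g' s) s ∧ g' s ≤ A + D / s) :
    AntitoneOn (fun s => g s - A * s - D * Real.log s) (Ioo t₁ 0) := by
  have hφ : ∀ s ∈ Ioo t₁ 0,
      HasDerivAt (fun s => g s - A * s - D * Real.log s) (g' s - A - D / s) s := by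
    intro s hs
    simpa [div_eq_mul_inv] using ((h s hs).1.fun_sub ((hasDerivAt_id' s).const_mul A)).fun_sub
      ((Real.hasDerivAt_log hs.2.ne).const_mul D)
  refine antitoneOn_of_hasDerivWithinAt_nonpos (f' := fun s => g' s - A - D / s)
    (convex_Ioo t₁ 0) (fun s hs => (hφ s hs).continuousAt.continuousWithinAt) ?_ ?_ <;>
    rw [interior_Ioo] <;> intro s hs
  · exact (hφ s hs).hasDerivWithinAt
  · linarith [(h s hs).2]

theorem tendsto_nhdsLT_zero_atBot_of_deriv_le_add_div {g g' : ℝ → ℝ} {A D : ℝ} (hD : 0 < D)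
    (h : ∀ᶠ s in 𝓝[<] 0, HasDerivAt g (g' s) s ∧ g' s ≤ A + D / s) :
    Tendsto g (𝓝[<] 0) atBot := by
  obtain ⟨t₁, ht₁, hsub⟩ := mem_nhdsLT_iff_exists_Ioo_subset.1 h
  have ht₀ : t₁ / 2 ∈ Ioo t₁ 0 := by constructor <;> linarith [mem_Iio.1 ht₁]
  set φ := fun s => g s - A * s - D * Real.log s
  have hanti : AntitoneOn φ (Ioo t₁ 0) := antitoneOn_sub_mul_log fun s hs => hsub hs
  have hlin : Tendsto (fun s : ℝ => φ (t₁ / 2) + A * s) (𝓝[<] 0) (𝓝 (φ (t₁ / 2))) := by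
    refine tendsto_nhdsWithin_of_tendsto_nhds ?_
    simpa using ((continuous_const_mul A).const_add (φ (t₁ / 2))).tendsto (0 : ℝ)
  refine tendsto_atBot_mono' _ ?_
    (hlin.add_atBot (Real.tendsto_log_nhdsLT_zero.const_mul_atBot hD))
  filter_upwards [Ioo_mem_nhdsLT ht₀.2] with s hs
  have := hanti ht₀ ⟨ht₀.1.trans hs.1, hs.2⟩ hs.1.le
  simp only [φ] at this ⊢
  linarith

theorem stmt_2_general {m : ℕ} (tinit : ℝ) (htinit : tinit < 0)
    (q q' : ℝ → EuclideanSpace ℝ (Fin m)) (Pfun : EuclideanSpace ℝ (Fin m) → ℝ)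
    (L : NNReal) (hLip : LipschitzWith L Pfun)
    (hq : ∀ t ∈ Set.Icc tinit 0, HasDerivAt q (q' t) t)
    (M : ℝ) (hbd : ∀ t ∈ Set.Icc tinit 0, ‖q' t‖ ≤ M)
    (a b K : ℝ → ℝ)
    (ha : ContinuousOn a (Set.Icc tinit 0))
    (hbcont : ContinuousOn b (Set.Icc tinit 0))
    (hKcont : ContinuousOn K (Set.Icc tinit 0))
    (hPpos : ∀ t ∈ Set.Ico tinit 0, 0 < Pfun (q t))
    (hP0 : Pfun (q 0) = 0) (hb0 : b 0 < 0) (hK0 : K 0 < 0)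
    (x' : ℝ → ℝ)
    (hx2 : ∀ t ∈ Set.Ico tinit 0,
      HasDerivAt x' (a t - K t * b t / Pfun (q t)) t) :
    ¬ (∀ t ∈ Set.Ico tinit 0, 0 < x' t) := by
  intro hslip
  have h0 : (0 : ℝ) ∈ Icc tinit 0 := ⟨htinit.le, le_rfl⟩
  set C : ℝ := L * M
  have hPle : ∀ s ∈ Icc tinit 0, Pfun (q s) ≤ C * -s := by
    intro s hs
    have := hLip.dist_comp_le_of_norm_hasDerivAt_le (convex_Icc tinit 0) hq hbd hs h0
    rw [hP0, Real.dist_eq, Real.dist_eq, sub_zero, sub_zero, abs_of_nonpos hs.2] at this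
    exact (le_abs_self _).trans this
  have hC : 0 < C := by
    have := (hPpos tinit ⟨le_rfl, htinit⟩).trans_le (hPle tinit ⟨le_rfl, htinit.le⟩)
    nlinarith
  obtain ⟨c, hc, hcKb⟩ := exists_between (mul_pos_of_neg_of_neg hK0 hb0)
  obtain ⟨A, hA⟩ := isCompact_Icc.exists_bound_of_continuousOn ha
  have hnear : ∀ᶠ s in 𝓝[<] (0 : ℝ), s ∈ Ioo tinit 0 := Ioo_mem_nhdsLT htinit
  have hKb : ∀ᶠ s in 𝓝[<] (0 : ℝ), c < K s * b s := by
    have := ((hKcont.mul hbcont) 0 h0).eventually (eventually_gt_nhds hcKb)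
    rw [nhdsWithin_Icc_eq_nhdsLE htinit] at this
    exact this.filter_mono (nhdsWithin_mono _ Iio_subset_Iic_self)
  have hx'' : ∀ᶠ s in 𝓝[<] (0 : ℝ), HasDerivAt x' (a s - K s * b s / Pfun (q s)) s ∧
      a s - K s * b s / Pfun (q s) ≤ A + c / C / s := by
    filter_upwards [hnear, hKb] with s hs hcs
    have hsI : s ∈ Icc tinit 0 := Ioo_subset_Icc_self hs
    refine ⟨hx2 s (Ioo_subset_Ico_self hs), ?_⟩
    have hforce : c / (C * -s) ≤ K s * b s / Pfun (q s) :=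
      div_le_div₀ (hc.le.trans hcs.le) hcs.le (hPpos s (Ioo_subset_Ico_self hs)) (hPle s hsI)
    have hdiv : c / C / s = -(c / (C * -s)) := by rw [div_div, mul_neg, div_neg, neg_neg]
    linarith [(le_abs_self (a s)).trans (hA s hsI)]
  obtain ⟨s, hs_neg, hs⟩ := (((tendsto_nhdsLT_zero_atBot_of_deriv_le_add_div (div_pos hc hC)
    hx'').eventually (eventually_lt_atBot 0)).and hnear).exists
  exact (hslip s (Ioo_subset_Ico_self hs)).not_gt hs_neg

/-- Theorem 1 of the paper (single point contact): with contact force `λ = -b/P`,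
tangential dynamics `ẍ = a - K·b/P`, `b < 0 < P` during slip, `P` Lipschitz in the
configuration `q` (which moves with bounded velocity), `P(0) = 0`, `b(0) < 0`,
`K(0) < 0`, slip motion (`ẋ > 0`) cannot persist on all of `[t_init, 0)`. -/
theorem stmt_2 {m : ℕ} (tinit : ℝ) (htinit : tinit < 0)
    (q q' : ℝ → EuclideanSpace ℝ (Fin m)) (Pfun : EuclideanSpace ℝ (Fin m) → ℝ)
    (L : NNReal) (hLip : LipschitzWith L Pfun)
    (hq : ∀ t ∈ Set.Icc tinit 0, HasDerivAt q (q' t) t)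
    (M : ℝ) (hbd : ∀ t ∈ Set.Icc tinit 0, ‖q' t‖ ≤ M)
    (a b K : ℝ → ℝ)
    (ha : ContinuousOn a (Set.Icc tinit 0))
    (hbcont : ContinuousOn b (Set.Icc tinit 0))
    (hKcont : ContinuousOn K (Set.Icc tinit 0))
    (hPpos : ∀ t ∈ Set.Ico tinit 0, 0 < Pfun (q t))
    (hbneg : ∀ t ∈ Set.Ico tinit 0, b t < 0)
    (hP0 : Pfun (q 0) = 0) (hb0 : b 0 < 0) (hK0 : K 0 < 0)
    (x x' : ℝ → ℝ)
    (hx1 : ∀ t ∈ Set.Ico tinit 0, HasDerivAt x (x' t) t)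
    (hx2 : ∀ t ∈ Set.Ico tinit 0,
      HasDerivAt x' (a t - K t * b t / Pfun (q t)) t)
    (hslip0 : 0 < x' tinit) :
    ¬ (∀ t ∈ Set.Ico tinit 0, 0 < x' t) :=
  stmt_2_general tinit htinit q q' Pfun L hLip hq M hbd a b K ha hbcont hKcont hPpos hP0 hb0 hK0 x'
    hx2
end

section
/- Let u, v : [s₀, ∞) → ℝ satisfy v′ = -v and u′ = -½·u + r(s) with |r(s)| ≤ C·e^{-2s}, and suppose u(s₀) < v(s₀) < 0. Then u(s) < v(s) for all s ≥ s₀ (for s₀ sufficiently large so that the perturbation term is dominated), and both tend to 0 as s → ∞. -/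
/-!
Everything reduces to one comparison principle: if `f' ≤ a f` on `[s₀, ∞)`, then
`f s ≤ f s₀ e^{a (s - s₀)}`, because `f e^{-a (s - s₀)}` is antitone. Applied to `±v` it solves
`v' = -v` exactly. For `d = u - v` one has `d' = -d/2 + (v/2 + r)`, and the domination hypothesis
gives `|r| < -v/4`, so `d' ≤ -d/2` and `d` stays negative. Finally `u - c e^{-2s}` and
`-u - c e^{-2s}` with `c = 2C/3` satisfy the homogeneous inequality, which traps `u` between two
functions tending to `0`.
-/

open Filter Real Set Topology

theorem le_mul_exp_of_hasDerivAt_le_mul {f f' : ℝ → ℝ} {a s₀ : ℝ}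
    (hf : ∀ s ∈ Ici s₀, HasDerivAt f (f' s) s) (hle : ∀ s ∈ Ici s₀, f' s ≤ a * f s) :
    ∀ s ≥ s₀, f s ≤ f s₀ * exp (a * (s - s₀)) := by
  have hg : ∀ s ∈ Ici s₀, HasDerivAt (fun s ↦ f s * exp (-a * (s - s₀)))
      ((f' s - a * f s) * exp (-a * (s - s₀))) s := by
    intro s hs
    have he := (((hasDerivAt_id' s).sub_const s₀).const_mul (-a)).exp
    exact ((hf s hs).fun_mul he).congr_deriv (by ring)
  have hanti : AntitoneOn (fun s ↦ f s * exp (-a * (s - s₀))) (Ici s₀) :=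
    antitoneOn_of_hasDerivWithinAt_nonpos (convex_Ici s₀)
      (fun s hs ↦ (hg s hs).continuousAt.continuousWithinAt)
      (fun s hs ↦ (hg s (interior_subset hs)).hasDerivWithinAt)
      (fun s hs ↦ mul_nonpos_of_nonpos_of_nonneg (sub_nonpos.2 (hle s (interior_subset hs)))
        (exp_pos _).le)
  intro s hs
  have h := hanti self_mem_Ici hs hs
  simp only [sub_self, mul_zero, exp_zero, mul_one] at h
  calc f s = f s * exp (-a * (s - s₀)) * exp (a * (s - s₀)) := by
        rw [mul_assoc, ← exp_add]; simp
    _ ≤ f s₀ * exp (a * (s - s₀)) := mul_le_mul_of_nonneg_right h (exp_pos _).le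

theorem eq_mul_exp_of_hasDerivAt_eq_mul {f : ℝ → ℝ} {a s₀ : ℝ}
    (hf : ∀ s ∈ Ici s₀, HasDerivAt f (a * f s) s) :
    ∀ s ≥ s₀, f s = f s₀ * exp (a * (s - s₀)) := by
  intro s hs
  refine le_antisymm (le_mul_exp_of_hasDerivAt_le_mul hf (fun _ _ ↦ le_rfl) s hs) ?_
  have hneg := le_mul_exp_of_hasDerivAt_le_mul (f := -f) (f' := fun s ↦ a * -f s)
    (fun s hs ↦ by simpa using (hf s hs).neg) (fun _ _ ↦ le_rfl) s hs
  simp only [Pi.neg_apply, neg_mul] at hneg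
  linarith

theorem le_of_hasDerivAt_neg_mul_add {u r : ℝ → ℝ} {a b C s₀ : ℝ} (hab : a < b)
    (hu : ∀ s ∈ Ici s₀, HasDerivAt u (-a * u s + r s) s)
    (hr : ∀ s ∈ Ici s₀, -(C * exp (-b * s)) ≤ r s) :
    ∀ s ≥ s₀, (u s₀ - C / (b - a) * exp (-b * s₀)) * exp (-a * (s - s₀)) +
      C / (b - a) * exp (-b * s) ≤ u s := by
  set c := C / (b - a)
  have hc : (b - a) * c = C := mul_div_cancel₀ C (sub_pos.2 hab).ne'
  have hp : ∀ s ∈ Ici s₀, HasDerivAt (fun s ↦ c * exp (-b * s) - u s)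
      (-b * (c * exp (-b * s)) - (-a * u s + r s)) s := fun s hs ↦
    ((((hasDerivAt_id' s).const_mul (-b)).exp.const_mul c).sub (hu s hs)).congr_deriv (by ring)
  intro s hs
  have := le_mul_exp_of_hasDerivAt_le_mul (a := -a) hp (fun s hs ↦ by
    have : (b - a) * c * exp (-b * s) = C * exp (-b * s) := by rw [hc]
    linarith [hr s hs]) s hs
  linarith

theorem tendsto_exp_neg_mul_sub_atTop {a s₀ : ℝ} (ha : 0 < a) :
    Tendsto (fun s ↦ exp (-a * (s - s₀))) atTop (𝓝 0) :=
  tendsto_exp_comp_nhds_zero.2 <|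
    (tendsto_atTop_add_const_right _ _ tendsto_id).const_mul_atTop_of_neg (neg_neg_of_pos ha)

theorem tendsto_zero_of_hasDerivAt_neg_mul_add {u r : ℝ → ℝ} {a b C s₀ : ℝ} (ha : 0 < a)
    (hab : a < b) (hu : ∀ s ∈ Ici s₀, HasDerivAt u (-a * u s + r s) s)
    (hr : ∀ s ∈ Ici s₀, |r s| ≤ C * exp (-b * s)) :
    Tendsto u atTop (𝓝 0) := by
  have hlower := le_of_hasDerivAt_neg_mul_add hab hu
    fun s hs ↦ (neg_le_neg (hr s hs)).trans (neg_abs_le _)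
  have hupper := le_of_hasDerivAt_neg_mul_add (u := -u) (r := -r) hab
    (fun s hs ↦ (hu s hs).neg.congr_deriv (by simp only [Pi.neg_apply]; ring))
    fun s hs ↦ neg_le_neg ((le_abs_self _).trans (hr s hs))
  have hlim (c d : ℝ) :
      Tendsto (fun s ↦ c * exp (-a * (s - s₀)) + d * exp (-b * s)) atTop (𝓝 0) := by
    simpa using ((tendsto_exp_neg_mul_sub_atTop ha).const_mul c).add
      ((tendsto_exp_neg_mul_sub_atTop (s₀ := 0) (ha.trans hab)).const_mul d)
  refine tendsto_of_tendsto_of_tendsto_of_le_of_le' (hlim _ _)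
    (by simpa only [neg_zero] using (hlim _ _).neg)
    (eventually_ge_atTop s₀ |>.mono hlower)
    (eventually_ge_atTop s₀ |>.mono fun s hs ↦ le_neg.1 (hupper s hs))

theorem mul_exp_neg_two_mul_lt {C c s₀ s : ℝ} (hC : 0 ≤ C) (hs : s₀ ≤ s)
    (h : C * exp (-2 * s₀) < c) : C * exp (-2 * s) < c * exp (-1 * (s - s₀)) :=
  calc C * exp (-2 * s) = C * exp (-2 * s₀) * exp (-2 * (s - s₀)) := by
        rw [mul_assoc, ← exp_add]; ring_nf
    _ ≤ C * exp (-2 * s₀) * exp (-1 * (s - s₀)) :=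
        mul_le_mul_of_nonneg_left (exp_le_exp.2 (by linarith)) (by positivity)
    _ < c * exp (-1 * (s - s₀)) := mul_lt_mul_of_pos_right h (exp_pos _)

/-- Abstract formulation of Lemma 2 (dynamic jam): with `v' = -v`,
`u' = -½u + r(s)`, `|r(s)| ≤ C·e^{-2s}`, `u(s₀) < v(s₀) < 0`, and `s₀` large enough
that the perturbation is dominated (`C·e^{-2s₀} < ¼·(-v(s₀))`), the ordering
`u < v` is preserved for all `s ≥ s₀` and both solutions tend to 0. -/
theorem stmt_9 (s₀ C : ℝ) (hC : 0 < C) (u v r : ℝ → ℝ)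
    (hv : ∀ s ∈ Set.Ici s₀, HasDerivAt v (-(v s)) s)
    (hu : ∀ s ∈ Set.Ici s₀, HasDerivAt u (-(1 / 2) * u s + r s) s)
    (hr : ∀ s ∈ Set.Ici s₀, |r s| ≤ C * Real.exp (-2 * s))
    (h1 : u s₀ < v s₀) (h2 : v s₀ < 0)
    (hdom : C * Real.exp (-2 * s₀) < (1 / 4) * (-(v s₀))) :
    (∀ s ≥ s₀, u s < v s) ∧
      Tendsto u atTop (nhds 0) ∧ Tendsto v atTop (nhds 0) := by
  have hv_eq : ∀ s ≥ s₀, v s = v s₀ * exp (-1 * (s - s₀)) :=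
    eq_mul_exp_of_hasDerivAt_eq_mul fun s hs ↦ (hv s hs).congr_deriv (by ring)
  have hforcing : ∀ s ∈ Ici s₀, v s / 2 + r s ≤ 0 := fun s hs ↦ by
    have hr_lt := (le_abs_self _).trans_lt <| (hr s hs).trans_lt <|
      mul_exp_neg_two_mul_lt hC.le hs hdom
    have hv_neg := mul_neg_of_neg_of_pos h2 (exp_pos (-1 * (s - s₀)))
    rw [hv_eq s hs]
    linarith
  have hlt : ∀ s ≥ s₀, u s < v s := fun s hs ↦ by
    have hdiff := le_mul_exp_of_hasDerivAt_le_mul (a := -(1 / 2))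
      (fun s hs ↦ (hu s hs).fun_sub (hv s hs)) (fun s hs ↦ by linarith [hforcing s hs]) s hs
    have hdiff₀ := mul_neg_of_neg_of_pos (sub_neg.2 h1) (exp_pos (-(1 / 2) * (s - s₀)))
    linarith
  refine ⟨hlt, tendsto_zero_of_hasDerivAt_neg_mul_add (by norm_num)
    (by norm_num : (1 / 2 : ℝ) < 2) hu hr, ?_⟩
  have hv_lim := (tendsto_exp_neg_mul_sub_atTop (s₀ := s₀) one_pos).const_mul (v s₀)
  rw [mul_zero] at hv_lim
  exact hv_lim.congr' (eventually_ge_atTop s₀ |>.mono fun s hs ↦ (hv_eq s hs).symm)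
end

section
/- For the slipping rod with P(φ) = m⁻¹[1 + l²ρ⁻²(cos²φ - μ cos φ sin φ)], writing c = l²/ρ², we have P(φ) = m⁻¹(1 + c·cos φ·(cos φ - μ sin φ)), and the minimum over φ of 1 + c cos²φ - cμ cos φ sin φ equals 1 + c/2 - (c/2)√(1 + μ²); hence P(φ) > 0 for all φ ∈ ℝ if and only if (1 + 2/c)² > 1 + μ², i.e., if and only if μ² < 4/c + 4/c². -/
set_option maxHeartbeats 1000000 in
private lemma rod_aux (c μ : ℝ) (hc0 : 0 < c) (hμ : 0 < μ) :
    IsLeast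
        {y : ℝ | ∃ φ : ℝ, y = 1 + c * Real.cos φ ^ 2 - c * μ * Real.cos φ * Real.sin φ}
        (1 + c / 2 - c / 2 * Real.sqrt (1 + μ ^ 2)) ∧
      ((0:ℝ) < 1 + c / 2 - c / 2 * Real.sqrt (1 + μ ^ 2) ↔
        μ ^ 2 < 4 / c + 4 / c ^ 2) := by
  obtain ⟨s, hsdef⟩ : ∃ s, s = Real.sqrt (1 + μ ^ 2) := ⟨_, rfl⟩
  have hs0 : 0 < s := hsdef ▸ Real.sqrt_pos.2 (by positivity)
  have hs2 : s ^ 2 = 1 + μ ^ 2 := hsdef ▸ Real.sq_sqrt (by positivity)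
  have hs1 : 1 ≤ s := by nlinarith [sq_nonneg μ]
  rw [← hsdef]
  -- lower bound
  have hlb : ∀ φ : ℝ, 1 + c / 2 - c / 2 * s ≤
      1 + c * Real.cos φ ^ 2 - c * μ * Real.cos φ * Real.sin φ := by
    intro φ
    have h1 := Real.sin_sq_add_cos_sq φ
    obtain ⟨a, ha⟩ : ∃ a, a = Real.cos φ := ⟨_, rfl⟩
    obtain ⟨b, hb⟩ : ∃ b, b = Real.sin φ := ⟨_, rfl⟩
    rw [← ha, ← hb] at h1 ⊢
    have hq : (a ^ 2 - b ^ 2) ^ 2 + (2 * (a * b)) ^ 2 = 1 := by nlinarith [sq_nonneg (a^2+b^2)]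
    have hx2 : ((a ^ 2 - b ^ 2) - 2 * μ * (a * b)) ^ 2 ≤ s ^ 2 := by
      nlinarith [sq_nonneg (μ * (a ^ 2 - b ^ 2) + 2 * (a * b))]
    have key : -s ≤ (a ^ 2 - b ^ 2) - 2 * μ * (a * b) := by
      nlinarith [sq_nonneg ((a ^ 2 - b ^ 2) - 2 * μ * (a * b) + s)]
    nlinarith [mul_nonneg hc0.le (by linarith : (0:ℝ) ≤ (a ^ 2 - b ^ 2) - 2 * μ * (a * b) + s)]
  -- witness
  have hx1a : (-1:ℝ) ≤ -(1 / s) := by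
    have : 1 / s ≤ 1 := by rw [div_le_one hs0]; exact hs1
    linarith
  have hx1b : -(1 / s) ≤ 1 := by
    have : 0 < 1 / s := by positivity
    linarith
  obtain ⟨φ₀, hφ₀⟩ : ∃ φ₀ : ℝ, φ₀ = Real.arccos (-(1 / s)) / 2 := ⟨_, rfl⟩
  have h2φ : 2 * φ₀ = Real.arccos (-(1 / s)) := by rw [hφ₀]; ring
  have hcos : Real.cos (2 * φ₀) = -(1 / s) := by
    rw [h2φ, Real.cos_arccos hx1a hx1b]
  have hsin : Real.sin (2 * φ₀) = μ / s := by
    rw [h2φ, Real.sin_arccos]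
    rw [show 1 - (-(1 / s)) ^ 2 = (μ / s) ^ 2 by
      field_simp
      nlinarith]
    exact Real.sqrt_sq (by positivity)
  have hwit : 1 + c / 2 - c / 2 * s =
      1 + c * Real.cos φ₀ ^ 2 - c * μ * Real.cos φ₀ * Real.sin φ₀ := by
    have hc2 : Real.cos φ₀ ^ 2 = 1 / 2 + Real.cos (2 * φ₀) / 2 := Real.cos_sq φ₀
    have hcs : Real.cos φ₀ * Real.sin φ₀ = Real.sin (2 * φ₀) / 2 := by
      rw [Real.sin_two_mul]; ring
    have h3 : Real.cos φ₀ * Real.sin φ₀ = μ / s / 2 := by rw [hcs, hsin]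
    rw [hc2, hcos, show c * μ * Real.cos φ₀ * Real.sin φ₀
        = c * μ * (Real.cos φ₀ * Real.sin φ₀) by ring, h3]
    field_simp
    nlinarith
  refine ⟨⟨⟨φ₀, hwit⟩, ?_⟩, ?_, ?_⟩
  · rintro y ⟨φ, rfl⟩
    exact hlb φ
  · intro h
    have hpos : (0:ℝ) < 1 + c / 2 + c / 2 * s := by positivity
    have h' : μ ^ 2 * c ^ 2 < 4 * c + 4 := by nlinarith
    rw [show (4:ℝ) / c + 4 / c ^ 2 = (4 * c + 4) / c ^ 2 by field_simp,
      lt_div_iff₀ (by positivity)]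
    linarith
  · intro h
    have h' : μ ^ 2 * c ^ 2 < 4 * c + 4 := by
      rw [show (4:ℝ) / c + 4 / c ^ 2 = (4 * c + 4) / c ^ 2 by field_simp,
        lt_div_iff₀ (by positivity)] at h
      linarith
    have h2c : (0:ℝ) < 1 + 2 / c := by positivity
    have hs2' : s ^ 2 < (1 + 2 / c) ^ 2 := by
      rw [hs2, show (1 + 2 / c) ^ 2 = 1 + 4 / c + 4 / c ^ 2 by field_simp; ring]
      linarith
    have hslt : s < 1 + 2 / c := by nlinarith
    have hmul := mul_lt_mul_of_pos_left hslt (by linarith : (0:ℝ) < c / 2)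
    rw [show c / 2 * (1 + 2 / c) = c / 2 + 1 by field_simp] at hmul
    linarith

/-- Painlevé condition for the slipping rod: with `c = l²/ρ²` and
`P(φ) = m⁻¹(1 + c·cos²φ - c·μ·cos φ·sin φ)`, the minimum over `φ` of
`1 + c·cos²φ - c·μ·cos φ·sin φ` equals `1 + c/2 - (c/2)·√(1+μ²)`; hence
`P(φ) > 0` for all `φ` iff `μ² < 4/c + 4/c²`. -/
theorem stmt_16 (m l ρ μ : ℝ) (hm : 0 < m) (hl : 0 < l) (hρ : 0 < ρ) (hμ : 0 < μ) :
    IsLeast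
        {y : ℝ | ∃ φ : ℝ, y = 1 + l ^ 2 / ρ ^ 2 * Real.cos φ ^ 2 -
          l ^ 2 / ρ ^ 2 * μ * Real.cos φ * Real.sin φ}
        (1 + (l ^ 2 / ρ ^ 2) / 2 -
          (l ^ 2 / ρ ^ 2) / 2 * Real.sqrt (1 + μ ^ 2)) ∧
      ((∀ φ : ℝ, 0 < m⁻¹ * (1 + l ^ 2 / ρ ^ 2 * Real.cos φ ^ 2 -
          l ^ 2 / ρ ^ 2 * μ * Real.cos φ * Real.sin φ)) ↔
        μ ^ 2 < 4 / (l ^ 2 / ρ ^ 2) + 4 / (l ^ 2 / ρ ^ 2) ^ 2) := by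
  have hc0 : 0 < l ^ 2 / ρ ^ 2 := by positivity
  obtain ⟨⟨hmem, hlow⟩, hiff⟩ := rod_aux (l ^ 2 / ρ ^ 2) μ hc0 hμ
  refine ⟨⟨hmem, hlow⟩, ?_, ?_⟩
  · intro h
    apply hiff.mp
    obtain ⟨φ₀, hφ₀⟩ := hmem
    have h0 := h φ₀
    rw [← hφ₀] at h0
    have := mul_pos hm h0
    rwa [← mul_assoc, mul_inv_cancel₀ hm.ne', one_mul] at this
  · intro h φ
    have hM := hiff.mpr h
    have hle := hlow ⟨φ, rfl⟩
    exact mul_pos (inv_pos.2 hm) (by linarith)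
end
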